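/- arXiv:2005.08458 — 2 statements merged into one kernel-verified Lean document; each statement's English description precedes it below -/
import Mathlib

section
/- Under Assumptions A and B, for any p ≥ 1 the optimal expected risk is continuous with respect to the φ^p-weak topology at P: for every sequence of probability measures P_l ∈ M_Z^{φ^p} with P_l → P φ^p-weakly (i.e. P_l → P weakly and ∫φ^p dP_l → ∫φ^p dP, P ∈ M_Z^{φ^p}), one has ϑ(P_l) → ϑ(P). -/
open MeasureTheory Filter Metric
open scoped Topology ENNReal RealInnerProductSpace

noncomputable section


/-! ### Basic auxiliary lemmas -/

lemma auxSInf_eq_zero {S : Set ℝ} (h0 : 0 ∈ S) (hnn : ∀ x ∈ S, 0 ≤ x) : sInf S = 0 :=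
  le_antisymm (csInf_le ⟨0, fun x hx => hnn x hx⟩ h0) (le_csInf ⟨0, h0⟩ hnn)

/-- The squashing map `t ↦ t / (1 + |t|)`. -/
def auxRho (t : ℝ) : ℝ := t / (1 + |t|)

lemma auxRho_cont : Continuous auxRho := by
  apply continuous_id.div (continuous_const.add continuous_abs)
  intro x
  show (1:ℝ) + |x| ≠ 0
  positivity

lemma auxRho_nonneg {t : ℝ} (h : 0 ≤ t) : 0 ≤ auxRho t := by
  unfold auxRho; positivity

lemma auxRho_le_one (t : ℝ) : |auxRho t| ≤ 1 := by
  unfold auxRho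
  rw [abs_div, abs_of_pos (show (0:ℝ) < 1 + |t| by positivity), div_le_one (by positivity)]
  linarith [abs_nonneg t]

lemma auxRho_aemeasurable_iff {Z : Type*} [MeasurableSpace Z] {μ : Measure Z} (v : Z → ℝ) :
    AEMeasurable (fun z => auxRho (v z)) μ ↔ AEMeasurable v μ := by
  constructor
  · intro h
    have hid : v = (fun s : ℝ => s / (1 - |s|)) ∘ fun z => auxRho (v z) := by
      funext z
      have h1 : (0:ℝ) < 1 + |v z| := by positivity
      simp only [Function.comp_apply, auxRho]
      rw [abs_div, abs_of_pos h1]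
      have h2 : 1 - |v z| / (1 + |v z|) = 1 / (1 + |v z|) := by field_simp; ring
      rw [h2]
      field_simp
    rw [hid]
    have hm : Measurable fun s : ℝ => s / (1 - |s|) :=
      measurable_id.div (measurable_const.sub measurable_id.abs)
    exact hm.comp_aemeasurable h
  · intro h
    exact auxRho_cont.measurable.comp_aemeasurable h

/-- countable infimum of nonneg a.e.-measurable real functions is a.e.-measurable. -/
lemma auxAEMeasurable_iInf {Z : Type*} [MeasurableSpace Z] {μ : Measure Z}
    (G : ℕ → Z → ℝ) (hG : ∀ j, AEMeasurable (G j) μ) :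
    AEMeasurable (fun z => ⨅ j, G j z) μ := by
  have h1 : ∀ᵐ z ∂μ, ∀ j, G j z = (hG j).mk _ z := ae_all_iff.2 fun j => (hG j).ae_eq_mk
  refine ⟨fun z => ⨅ j, (hG j).mk _ z, Measurable.iInf fun j => (hG j).measurable_mk, ?_⟩
  filter_upwards [h1] with z hz
  exact iInf_congr hz

/-- the infimum over tails of a sequence tending to `a` tends to `a`. -/
lemma auxTendsto_iInf_tail {u : ℕ → ℝ} {a : ℝ} (h : Tendsto u atTop (𝓝 a))
    (hb : ∀ j, 0 ≤ u j) :
    Tendsto (fun K => ⨅ j, u (K + j)) atTop (𝓝 a) := by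
  rw [Metric.tendsto_atTop] at h ⊢
  intro ε hε
  obtain ⟨N, hN⟩ := h (ε / 2) (by positivity)
  refine ⟨N, fun K hK => ?_⟩
  have hbb : ∀ K : ℕ, BddBelow (Set.range fun j => u (K + j)) :=
    fun K => ⟨0, by rintro x ⟨j, rfl⟩; exact hb _⟩
  have hup : (⨅ j, u (K + j)) ≤ u (K + 0) := ciInf_le (hbb K) 0
  have hlo : a - ε / 2 ≤ ⨅ j, u (K + j) := by
    apply le_ciInf
    intro j
    have := hN (K + j) (le_trans hK (Nat.le_add_right _ _))
    rw [Real.dist_eq] at this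
    have := abs_lt.1 this
    linarith [this.1]
  have h0 := hN (K + 0) (le_trans hK (Nat.le_add_right _ _))
  rw [Real.dist_eq] at h0 ⊢
  have h0' := abs_lt.1 h0
  rw [abs_lt]
  constructor <;> [linarith [h0'.1]; linarith [h0'.2]]

lemma auxMin_tendsto_self {b : ℝ} (hb : True) :
    Tendsto (fun M : ℕ => min b (M : ℝ)) atTop (𝓝 b) := by
  have : ∀ᶠ M : ℕ in atTop, min b (M : ℝ) = b := by
    obtain ⟨N, hN⟩ := exists_nat_ge b
    filter_upwards [eventually_ge_atTop N] with M hM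
    exact min_eq_left (hN.trans (by exact_mod_cast hM))
  exact Tendsto.congr' (this.mono fun M hM => hM.symm) tendsto_const_nhds


section Sync

variable {Z : Type*} [MeasurableSpace Z] [TopologicalSpace Z]
variable {P : ℕ → Measure Z} {Plim : Measure Z}

lemma auxBCF_integrable (u : BoundedContinuousFunction Z ℝ) {μ : Measure Z}
    [IsProbabilityMeasure μ] (h : AEMeasurable (⇑u) μ) : Integrable (⇑u) μ :=
  Integrable.mono' (integrable_const ‖u‖) h.aestronglyMeasurable
    (Eventually.of_forall fun z => u.norm_coe_le_norm z)

variable [∀ l, IsProbabilityMeasure (P l)] [IsProbabilityMeasure Plim]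

/-- status synchronization: an `hweak`-limit family eventually shares the a.e.-measurability
status of the limit, honest version. -/
lemma auxSync_honest
    (hweak : ∀ g : BoundedContinuousFunction Z ℝ,
      Tendsto (fun l => ∫ z, g z ∂(P l)) atTop (𝓝 (∫ z, g z ∂Plim)))
    (u : BoundedContinuousFunction Z ℝ) (hu : AEMeasurable (⇑u) Plim) :
    ∀ᶠ l in atTop, AEMeasurable (⇑u) (P l) := by
  by_contra h
  have hfreq : ∃ᶠ l in atTop, ¬ AEMeasurable (⇑u) (P l) := by
    rwa [Filter.not_eventually] at h
  have h0 : ∀ l, ¬ AEMeasurable (⇑u) (P l) → (∫ z, u z ∂(P l)) = 0 := fun l hl =>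
    integral_undef fun hi => hl hi.aemeasurable
  have h1 : ∀ l, ¬ AEMeasurable (⇑u) (P l) →
      (∫ z, (u + 1 : BoundedContinuousFunction Z ℝ) z ∂(P l)) = 0 := by
    intro l hl
    refine integral_undef fun hi => hl ?_
    have h2 : AEMeasurable (fun z => (u + 1 : BoundedContinuousFunction Z ℝ) z - 1) (P l) :=
      hi.aemeasurable.sub aemeasurable_const
    simpa using h2
  have t0 := hweak u
  have t1 := hweak (u + 1)
  have e0 : (∫ z, u z ∂Plim) = 0 := by
    have := IsClosed.mem_of_frequently_of_tendsto (isClosed_singleton (x := (0:ℝ)))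
      (hfreq.mono fun l hl => by simpa using h0 l hl) t0
    simpa using this
  have e1 : (∫ z, (u + 1 : BoundedContinuousFunction Z ℝ) z ∂Plim) = 0 := by
    have := IsClosed.mem_of_frequently_of_tendsto (isClosed_singleton (x := (0:ℝ)))
      (hfreq.mono fun l hl => by simpa using h1 l hl) t1
    simpa using this
  have e2 : (∫ z, (u + 1 : BoundedContinuousFunction Z ℝ) z ∂Plim)
      = (∫ z, u z ∂Plim) + 1 := by
    have hInt : Integrable (⇑u) Plim := auxBCF_integrable u hu
    have : (∫ z, (u + 1 : BoundedContinuousFunction Z ℝ) z ∂Plim)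
        = ∫ z, (u z + 1) ∂Plim := by
      congr 1
    rw [this, integral_add hInt (integrable_const 1)]
    simp
  rw [e1, e0] at e2
  norm_num at e2

/-- status synchronization, junky version. -/
lemma auxSync_junk
    (hweak : ∀ g : BoundedContinuousFunction Z ℝ,
      Tendsto (fun l => ∫ z, g z ∂(P l)) atTop (𝓝 (∫ z, g z ∂Plim)))
    (u : BoundedContinuousFunction Z ℝ) (hu : ¬ AEMeasurable (⇑u) Plim) :
    ∀ᶠ l in atTop, ¬ AEMeasurable (⇑u) (P l) := by
  by_contra h
  rw [Filter.not_eventually] at h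
  have hfreq : ∃ᶠ l in atTop, AEMeasurable (⇑u) (P l) := h.mono fun l hl => not_not.1 hl
  have e0 : (∫ z, u z ∂Plim) = 0 := integral_undef fun hi => hu hi.aemeasurable
  have e1 : (∫ z, (u + 1 : BoundedContinuousFunction Z ℝ) z ∂Plim) = 0 := by
    refine integral_undef fun hi => hu ?_
    have h2 : AEMeasurable (fun z => (u + 1 : BoundedContinuousFunction Z ℝ) z - 1) Plim :=
      hi.aemeasurable.sub aemeasurable_const
    simpa using h2
  have t0 := hweak u
  have t1 := hweak (u + 1)
  have tdiff : Tendsto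
      (fun l => (∫ z, (u + 1 : BoundedContinuousFunction Z ℝ) z ∂(P l)) - ∫ z, u z ∂(P l))
      atTop (𝓝 0) := by
    have := t1.sub t0
    rw [e1, e0] at this
    simpa using this
  have hfr1 : ∃ᶠ l in atTop,
      ((∫ z, (u + 1 : BoundedContinuousFunction Z ℝ) z ∂(P l)) - ∫ z, u z ∂(P l))
        ∈ ({1} : Set ℝ) := by
    refine hfreq.mono fun l hl => ?_
    have hInt : Integrable (⇑u) (P l) := auxBCF_integrable u hl
    have : (∫ z, (u + 1 : BoundedContinuousFunction Z ℝ) z ∂(P l))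
        = ∫ z, (u z + 1) ∂(P l) := by congr 1
    rw [Set.mem_singleton_iff, this, integral_add hInt (integrable_const 1)]
    simp
  have := IsClosed.mem_of_frequently_of_tendsto (isClosed_singleton (x := (1:ℝ))) hfr1 tdiff
  simp at this

end Sync


/-- Assumption A(a) implies continuity of the feature map. -/
lemma auxPhi_continuous {X Y H : Type*} [NormedAddCommGroup X] [NormedAddCommGroup Y]
    [NormedAddCommGroup H] [InnerProductSpace ℝ H] (Φ : X → H)
    (hAa : ∀ Z₀ : Set (X × Y), IsCompact Z₀ → ∀ ε > 0, ∃ η > 0,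
      ∀ x ∈ Prod.fst '' Z₀, ∀ x' ∈ Prod.fst '' Z₀, ‖x' - x‖ < η → ‖Φ x' - Φ x‖ < ε)
    (y₀ : Y) : Continuous Φ := by
  apply SeqContinuous.continuous
  intro xs x hx
  rw [Metric.tendsto_atTop]
  intro ε hε
  have hcomp : IsCompact ((insert x (Set.range xs)) ×ˢ ({y₀} : Set Y)) :=
    hx.isCompact_insert_range.prod isCompact_singleton
  obtain ⟨η, hη, hkey⟩ := hAa _ hcomp ε hε
  have hmem : ∀ x' ∈ insert x (Set.range xs),
      x' ∈ Prod.fst '' ((insert x (Set.range xs)) ×ˢ ({y₀} : Set Y)) := fun x' hx' =>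
    ⟨(x', y₀), ⟨hx', rfl⟩, rfl⟩
  obtain ⟨N, hN⟩ := Metric.tendsto_atTop.1 hx η hη
  refine ⟨N, fun n hn => ?_⟩
  rw [dist_eq_norm]
  refine hkey x (hmem x (Set.mem_insert _ _)) (xs n)
    (hmem _ (Set.mem_insert_of_mem _ ⟨n, rfl⟩)) ?_
  rw [← dist_eq_norm]
  exact hN n hn

/-- Pointwise equicontinuity of the family `z ↦ c z (λⱼ (Φ z.1))` for equi-Lipschitz
functionals `λⱼ`. -/
lemma auxEquicont {X Y H : Type*} [NormedAddCommGroup X] [NormedAddCommGroup Y]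
    [NormedAddCommGroup H] [InnerProductSpace ℝ H] {ι : Type*}
    (Φ : X → H) (hΦ : Continuous Φ) (c : X × Y → ℝ → ℝ)
    (hBb : Continuous fun q : (X × Y) × ℝ => c q.1 q.2)
    (β : ℝ) (hβ : 0 < β)
    (lam : ι → H → ℝ) (hlam : ∀ j v w, |lam j v - lam j w| ≤ β * ‖v - w‖)
    (hlam0 : ∀ j, lam j 0 = 0)
    (z₀ : X × Y) {ε : ℝ} (hε : 0 < ε) :
    ∃ δ > 0, ∀ z : X × Y, dist z z₀ < δ → ∀ j,
      |c z (lam j (Φ z.1)) - c z₀ (lam j (Φ z₀.1))| ≤ ε := by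
  set T : ℝ := β * ‖Φ z₀.1‖ + 1 with hTdef
  have hT1 : 1 ≤ T := by nlinarith [norm_nonneg (Φ z₀.1), hβ.le]
  -- local moduli for c around (z₀, s)
  have hc : ∀ s : ℝ, ∃ δ > 0, ∀ q : (X × Y) × ℝ,
      dist q (z₀, s) < 2 * δ → |c q.1 q.2 - c z₀ s| < ε / 2 := by
    intro s
    have hco := hBb.continuousAt (x := (z₀, s))
    rw [Metric.continuousAt_iff] at hco
    obtain ⟨δ', hδ', hball⟩ := hco (ε / 2) (by positivity)
    refine ⟨δ' / 2, by positivity, fun q hq => ?_⟩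
    have h2 := hball (show dist q (z₀, s) < δ' by linarith)
    rwa [Real.dist_eq] at h2
  choose δs hδs hs using hc
  have hcov : Set.Icc (-T) T ⊆ ⋃ s : ℝ, Metric.ball s (δs s) := fun s _ =>
    Set.mem_iUnion.2 ⟨s, Metric.mem_ball_self (hδs s)⟩
  obtain ⟨S, hS⟩ := isCompact_Icc.elim_finite_subcover _ (fun s => Metric.isOpen_ball) hcov
  have hSne : S.Nonempty := by
    have h0 : (0:ℝ) ∈ Set.Icc (-T) T := by constructor <;> linarith
    obtain ⟨s, hsS, _⟩ := Set.mem_iUnion₂.1 (hS h0)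
    exact ⟨s, hsS⟩
  set δ₀ : ℝ := S.inf' hSne δs with hδ₀def
  have hδ₀pos : 0 < δ₀ := by
    rw [hδ₀def, Finset.lt_inf'_iff]
    exact fun s _ => hδs s
  -- modulus for Φ at z₀.1
  obtain ⟨δΦ, hδΦ, hΦball⟩ := Metric.continuousAt_iff.1 hΦ.continuousAt
    (min δ₀ 1 / (β + 1)) (by positivity)
  refine ⟨min δΦ δ₀, by positivity, fun z hz j => ?_⟩
  have hzx : dist z.1 z₀.1 < δΦ := by
    calc dist z.1 z₀.1 ≤ dist z z₀ := by
          rw [Prod.dist_eq]; exact le_max_left _ _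
      _ < δΦ := lt_of_lt_of_le hz (min_le_left _ _)
  have hzz : dist z z₀ < δ₀ := lt_of_lt_of_le hz (min_le_right _ _)
  have hΦd : ‖Φ z.1 - Φ z₀.1‖ < min δ₀ 1 / (β + 1) := by
    have := hΦball hzx
    rwa [dist_eq_norm] at this
  have hvar : |lam j (Φ z.1) - lam j (Φ z₀.1)| < min δ₀ 1 := by
    refine lt_of_le_of_lt (hlam j _ _) ?_
    have h1 : β * ‖Φ z.1 - Φ z₀.1‖ < β * (min δ₀ 1 / (β + 1)) :=
      mul_lt_mul_of_pos_left hΦd hβ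
    have h2 : β * (min δ₀ 1 / (β + 1)) ≤ min δ₀ 1 := by
      rw [mul_div_assoc']
      rw [div_le_iff₀ (by positivity)]
      have : 0 ≤ min δ₀ 1 := le_min hδ₀pos.le zero_le_one
      nlinarith
    linarith
  -- lam j (Φ z₀.1) lies in Icc (−T) T
  have hbound : |lam j (Φ z₀.1)| ≤ β * ‖Φ z₀.1‖ := by
    have := hlam j (Φ z₀.1) 0
    rw [hlam0 j, sub_zero, sub_zero] at this
    exact this
  have hsmem : lam j (Φ z₀.1) ∈ Set.Icc (-T) T := by
    have := abs_le.1 hbound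
    constructor <;> [linarith [this.1]; linarith [this.2]]
  obtain ⟨si, hsiS, hsib⟩ := Set.mem_iUnion₂.1 (hS hsmem)
  have hδ₀le : δ₀ ≤ δs si := Finset.inf'_le _ hsiS
  rw [Metric.mem_ball, Real.dist_eq] at hsib
  -- first comparison : c z (lam j (Φ z.1)) vs c z₀ si
  have hq1 : |c z (lam j (Φ z.1)) - c z₀ si| < ε / 2 := by
    have hd : dist ((z, lam j (Φ z.1)) : (X × Y) × ℝ) (z₀, si) < 2 * δs si := by
      rw [Prod.dist_eq]
      apply max_lt
      · linarith
      · rw [Real.dist_eq]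
        calc |lam j (Φ z.1) - si|
            ≤ |lam j (Φ z.1) - lam j (Φ z₀.1)| + |lam j (Φ z₀.1) - si| := abs_sub_le _ _ _
          _ < min δ₀ 1 + δs si := by linarith
          _ ≤ 2 * δs si := by have := min_le_left δ₀ 1; linarith
    exact hs si (z, lam j (Φ z.1)) hd
  -- second comparison : c z₀ (lam j (Φ z₀.1)) vs c z₀ si
  have hq2 : |c z₀ (lam j (Φ z₀.1)) - c z₀ si| < ε / 2 := by
    have hd : dist ((z₀, lam j (Φ z₀.1)) : (X × Y) × ℝ) (z₀, si) < 2 * δs si := by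
      rw [Prod.dist_eq]
      apply max_lt
      · have h := hδs si
        simp only [dist_self]
        linarith
      · rw [Real.dist_eq]; linarith
    exact hs si (z₀, lam j (Φ z₀.1)) hd
  calc |c z (lam j (Φ z.1)) - c z₀ (lam j (Φ z₀.1))|
      ≤ |c z (lam j (Φ z.1)) - c z₀ si| + |c z₀ si - c z₀ (lam j (Φ z₀.1))| := abs_sub_le _ _ _
    _ ≤ ε / 2 + ε / 2 := by
        rw [abs_sub_comm (c z₀ si)]
        exact add_le_add hq1.le hq2.le
    _ = ε := by ring

/-- continuity of a countable infimum of a pointwise-equicontinuous family. -/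
lemma auxInf_continuous {Z : Type*} [PseudoMetricSpace Z]
    (G : ℕ → Z → ℝ) (h0 : ∀ j z, 0 ≤ G j z)
    (hequi : ∀ z₀ : Z, ∀ ε > 0, ∃ δ > 0, ∀ z, dist z z₀ < δ → ∀ j, |G j z - G j z₀| ≤ ε) :
    Continuous fun z => ⨅ j, G j z := by
  rw [Metric.continuous_iff]
  intro z₀ ε hε
  obtain ⟨δ, hδ, hkey⟩ := hequi z₀ (ε / 2) (by positivity)
  refine ⟨δ, hδ, fun z hz => ?_⟩
  have hbb : ∀ w : Z, BddBelow (Set.range fun j => G j w) :=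
    fun w => ⟨0, by rintro x ⟨j, rfl⟩; exact h0 _ _⟩
  have hle1 : (⨅ j, G j z) - ε / 2 ≤ (⨅ j, G j z₀) := by
    apply le_ciInf
    intro j
    have h1 := (abs_le.1 (hkey z hz j)).2
    have h2 : (⨅ j, G j z) ≤ G j z := ciInf_le (hbb z) j
    linarith
  have hle2 : (⨅ j, G j z₀) - ε / 2 ≤ (⨅ j, G j z) := by
    apply le_ciInf
    intro j
    have h1 := (abs_le.1 (hkey z hz j)).1
    have h2 : (⨅ j, G j z₀) ≤ G j z₀ := ciInf_le (hbb z₀) j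
    linarith
  rw [Real.dist_eq, abs_lt]
  constructor <;> [linarith; linarith]


/-- Baire-category junk-exclusion: if each `v m` is non-a.e.-measurable w.r.t. `μ m`,
then some `[0,1]`-combination `z ↦ ∑' i, a i * ((1/2)^(i+1) * v i z)` is frequently
non-a.e.-measurable. -/
lemma auxBaire {Z : Type*} [MeasurableSpace Z] [TopologicalSpace Z]
    (μ : ℕ → Measure Z)
    (v : ℕ → Z → ℝ) (hvc : ∀ m, Continuous (v m)) (hv0 : ∀ m z, 0 ≤ v m z)
    (hv1 : ∀ m z, v m z ≤ 1)
    (hjunk : ∀ m, ¬ AEMeasurable (v m) (μ m)) :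
    ∃ a : ℕ → ℝ, (∀ i, a i ∈ Set.Icc (0:ℝ) 1) ∧
      ∃ᶠ m in atTop, ¬ AEMeasurable (fun z => ∑' i, a i * ((1/2:ℝ)^(i+1) * v i z)) (μ m) := by
  classical
  set w : ℕ → ℝ := fun i => (1/2:ℝ)^(i+1) with hwdef
  have hwpos : ∀ i, 0 < w i := fun i => by positivity
  have hw : Summable w := by
    have : Summable fun i : ℕ => ((1:ℝ)/2)^i * (1/2) := summable_geometric_two.mul_right _
    refine this.congr fun i => ?_
    show (1/2:ℝ) ^ i * (1 / 2) = (1/2:ℝ) ^ (i+1)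
    rw [pow_succ]
  set C := ∀ _ : ℕ, (Set.Icc (0:ℝ) 1) with hCdef
  set G : C → Z → ℝ := fun a z => ∑' i, (a i : ℝ) * (w i * v i z) with hGdef
  have hsum : ∀ (b : ℕ → ℝ), (∀ i, b i ∈ Set.Icc (0:ℝ) 1) → ∀ z,
      Summable fun i => b i * (w i * v i z) := by
    intro b hb z
    refine Summable.of_nonneg_of_le (fun i => ?_) (fun i => ?_) hw
    · exact mul_nonneg (hb i).1 (mul_nonneg (hwpos i).le (hv0 i z))
    · calc b i * (w i * v i z) ≤ 1 * (w i * 1) := by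
            apply mul_le_mul (hb i).2 ?_ (mul_nonneg (hwpos i).le (hv0 i z)) zero_le_one
            exact mul_le_mul_of_nonneg_left (hv1 i z) (hwpos i).le
        _ = w i := by ring
  have hGz : ∀ z, Continuous fun a : C => G a z := by
    intro z
    apply continuous_tsum
      (fun i => (continuous_subtype_val.comp (continuous_apply i)).mul continuous_const) hw
    intro i a
    rw [Real.norm_eq_abs, abs_of_nonneg]
    · calc (a i : ℝ) * (w i * v i z) ≤ 1 * (w i * 1) := by
            apply mul_le_mul (a i).2.2 ?_ (mul_nonneg (hwpos i).le (hv0 i z)) zero_le_one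
            exact mul_le_mul_of_nonneg_left (hv1 i z) (hwpos i).le
        _ = w i := by ring
    · exact mul_nonneg (a i).2.1 (mul_nonneg (hwpos i).le (hv0 i z))
  by_cases hpos : ∃ a : C, ∃ᶠ m in atTop, ¬ AEMeasurable (G a) (μ m)
  · obtain ⟨a, ha⟩ := hpos
    exact ⟨fun i => (a i : ℝ), fun i => (a i).2, ha⟩
  exfalso
  push_neg at hpos
  have hev : ∀ a : C, ∀ᶠ m in atTop, AEMeasurable (G a) (μ m) := by
    intro a
    have := hpos a
    exact this
  set A : ℕ → Set C := fun m => {a | AEMeasurable (G a) (μ m)} with hAdef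
  have hAclosed : ∀ m, IsClosed (A m) := by
    intro m
    apply IsSeqClosed.isClosed
    intro x a hmem hconv
    exact aemeasurable_of_tendsto_metrizable_ae atTop (fun j => hmem j)
      (ae_of_all _ fun z => ((hGz z).tendsto a).comp hconv)
  set B : ℕ → Set C := fun N => ⋂ m, ⋂ (_ : N ≤ m), A m with hBdef
  have hBclosed : ∀ N, IsClosed (B N) :=
    fun N => isClosed_iInter fun m => isClosed_iInter fun _ => hAclosed m
  have hcover : ⋃ N, B N = Set.univ := by
    ext a
    simp only [Set.mem_iUnion, Set.mem_univ, iff_true]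
    obtain ⟨N, hN⟩ := eventually_atTop.1 (hev a)
    exact ⟨N, Set.mem_iInter.2 fun m => Set.mem_iInter.2 fun hm => hN m hm⟩
  haveI : Nonempty C := ⟨fun _ => ⟨0, by norm_num⟩⟩
  obtain ⟨N, hNint⟩ := nonempty_interior_of_iUnion_of_closed hBclosed hcover
  obtain ⟨a₀, ha₀⟩ := hNint
  obtain ⟨I, u, hIu, hsub⟩ := isOpen_pi_iff.1 isOpen_interior a₀ ha₀
  set m : ℕ := max (I.sup id + 1) N with hmdef
  have hmI : m ∉ I := by
    intro h
    have h1 : m ≤ I.sup id := Finset.le_sup (f := id) h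
    have h2 : I.sup id + 1 ≤ m := le_max_left _ _
    omega
  have hmN : N ≤ m := le_max_right _ _
  set b0 : C := Function.update a₀ m ⟨0, by norm_num⟩ with hb0def
  set b1 : C := Function.update a₀ m ⟨1, by norm_num⟩ with hb1def
  have hmemb : ∀ b : C, (∀ i, i ∈ I → b i = a₀ i) → b ∈ A m := by
    intro b hb
    have h1 : b ∈ (↑I : Set ℕ).pi u := by
      intro i hi
      rw [hb i hi]
      exact (hIu i hi).2
    have h2 := interior_subset (hsub h1)
    rw [hBdef] at h2
    simp only [Set.mem_iInter] at h2
    exact h2 m hmN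
  have hb0m : b0 ∈ A m := hmemb b0 fun i hi =>
    Function.update_of_ne (fun h : i = m => hmI (h ▸ hi)) _ _
  have hb1m : b1 ∈ A m := hmemb b1 fun i hi =>
    Function.update_of_ne (fun h : i = m => hmI (h ▸ hi)) _ _
  have hdiff : (fun z => G b1 z - G b0 z) = fun z => w m * v m z := by
    funext z
    rw [hGdef]
    simp only
    rw [← Summable.tsum_sub (hsum (fun i => (b1 i : ℝ)) (fun i => (b1 i).2) z)
      (hsum (fun i => (b0 i : ℝ)) (fun i => (b0 i).2) z)]
    have hterm : ∀ i, ((b1 i : ℝ) * (w i * v i z) - (b0 i : ℝ) * (w i * v i z))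
        = ((b1 i : ℝ) - (b0 i : ℝ)) * (w i * v i z) := fun i => by ring
    rw [tsum_congr hterm]
    rw [tsum_eq_single m]
    · have e1 : b1 m = ⟨1, by norm_num⟩ := Function.update_self _ _ _
      have e0 : b0 m = ⟨0, by norm_num⟩ := Function.update_self _ _ _
      rw [e1, e0]
      norm_num
    · intro i hi
      have e1 : b1 i = a₀ i := Function.update_of_ne hi _ _
      have e0 : b0 i = a₀ i := Function.update_of_ne hi _ _
      rw [e1, e0, sub_self, zero_mul]
  have hAEM : AEMeasurable (fun z => w m * v m z) (μ m) := by
    rw [← hdiff]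
    exact hb1m.sub hb0m
  apply hjunk m
  have : (fun z => (w m)⁻¹ * (w m * v m z)) = v m := by
    funext z
    rw [inv_mul_cancel_left₀ (hwpos m).ne']
  rw [← this]
  exact hAEM.const_mul _


section WeakLimit

variable {H : Type*} [NormedAddCommGroup H] [InnerProductSpace ℝ H]
open InnerProductSpace

set_option maxHeartbeats 1000000 in
/-- Any `β`-bounded sequence in a real inner product space has a subsequence whose inner
products against every vector converge (to a `β`-Lipschitz limit functional). -/
lemma auxWeakLimit (β : ℝ) (hβ : 0 < β) (fs : ℕ → H) (hfs : ∀ j, ‖fs j‖ ≤ β) :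
    ∃ ψ : ℕ → ℕ, StrictMono ψ ∧ ∃ τ : H → ℝ,
      (∀ v w, |τ v - τ w| ≤ β * ‖v - w‖) ∧
      ∀ v : H, Tendsto (fun k => ⟪fs (ψ k), v⟫) atTop (𝓝 (τ v)) := by
  classical
  set e : ℕ → H := gramSchmidtNormed ℝ fs with hedef
  have he_norm : ∀ i, e i = 0 ∨ ‖e i‖ = 1 := by
    intro i
    by_cases h : e i = 0
    · exact Or.inl h
    · exact Or.inr (gramSchmidtNormed_unit_length' h)
  have he_le : ∀ i, ‖e i‖ ≤ 1 := by
    intro i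
    rcases he_norm i with h | h
    · simp [h]
    · rw [h]
  have he_orth : ∀ i j, i ≠ j → ⟪e i, e j⟫ = 0 := by
    intro i j hij
    rw [hedef]
    simp only [gramSchmidtNormed, real_inner_smul_left, real_inner_smul_right,
      RCLike.ofReal_real_eq_id, id_eq]
    rw [gramSchmidt_orthogonal ℝ fs hij]
    ring
  -- Bessel inequality, finite form
  have hbessel : ∀ (v : H) (s : Finset ℕ), (∑ i ∈ s, ⟪v, e i⟫ ^ 2) ≤ ‖v‖ ^ 2 := by
    intro v s
    set wv : H := ∑ i ∈ s, ⟪v, e i⟫ • e i with hwv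
    have hvw : ⟪v, wv⟫ = ∑ i ∈ s, ⟪v, e i⟫ ^ 2 := by
      rw [hwv, inner_sum]
      refine Finset.sum_congr rfl fun i _ => ?_
      rw [real_inner_smul_right]
      ring
    have hww : ⟪wv, wv⟫ = ∑ i ∈ s, ⟪v, e i⟫ ^ 2 * ‖e i‖ ^ 2 := by
      rw [hwv, sum_inner]
      refine Finset.sum_congr rfl fun i hi => ?_
      rw [real_inner_smul_left, inner_sum, Finset.sum_eq_single_of_mem i hi]
      · rw [real_inner_smul_right, real_inner_self_eq_norm_sq]
        ring
      · intro k hk hki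
        rw [real_inner_smul_right, he_orth i k (Ne.symm hki)]
        ring
    have h2 : ‖wv‖ ^ 2 ≤ ∑ i ∈ s, ⟪v, e i⟫ ^ 2 := by
      rw [← real_inner_self_eq_norm_sq, hww]
      refine Finset.sum_le_sum fun i _ => ?_
      have h3 : ‖e i‖ ^ 2 ≤ 1 := by
        have := he_le i
        nlinarith [norm_nonneg (e i)]
      nlinarith [sq_nonneg (⟪v, e i⟫ : ℝ)]
    have h3 : (0:ℝ) ≤ ‖v - wv‖ ^ 2 := sq_nonneg _
    rw [norm_sub_sq_real] at h3
    rw [hvw] at h3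
    linarith
  -- coefficients vanish above the diagonal
  have hC0 : ∀ j i, j < i → ⟪fs j, e i⟫ = 0 := by
    intro j i hji
    have hmem := mem_span_gramSchmidt ℝ fs (le_refl j)
    have hker : Submodule.span ℝ (gramSchmidt ℝ fs '' Set.Iic j)
        ≤ LinearMap.ker (innerSL ℝ (e i) : H →ₗ[ℝ] ℝ) := by
      rw [Submodule.span_le]
      rintro x ⟨k, hk, rfl⟩
      rw [SetLike.mem_coe, LinearMap.mem_ker]
      show ⟪e i, gramSchmidt ℝ fs k⟫ = 0
      rw [hedef]
      simp only [gramSchmidtNormed, real_inner_smul_left, RCLike.ofReal_real_eq_id, id_eq]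
      rw [gramSchmidt_orthogonal ℝ fs (by
        intro h
        rw [h] at hji
        exact absurd hk (by simpa using hji.not_ge))]
      ring
    have := hker hmem
    rw [LinearMap.mem_ker] at this
    have h2 : ⟪e i, fs j⟫ = 0 := this
    rw [real_inner_comm] at h2
    exact h2
  -- representation of inner products through the orthonormal family
  have hrepr : ∀ j R, j < R → ∀ v : H,
      ⟪fs j, v⟫ = ∑ i ∈ Finset.range R, ⟪fs j, e i⟫ * ⟪e i, v⟫ := by
    intro j R hjR v
    have hfs_eq : fs j = ∑ i ∈ Finset.range R, ⟪fs j, e i⟫ • e i := by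
      set r : H := fs j - ∑ i ∈ Finset.range R, ⟪fs j, e i⟫ • e i with hrdef
      have hspan : ∀ k, gramSchmidt ℝ fs k ∈ Submodule.span ℝ (e '' Set.Iio R) → True := fun _ _ => trivial
      -- fs j belongs to the span of the e's below R
      have hfsmem : fs j ∈ Submodule.span ℝ (e '' Set.Iio R) := by
        have h1 := mem_span_gramSchmidt ℝ fs (le_refl j)
        have h2 : Submodule.span ℝ (gramSchmidt ℝ fs '' Set.Iic j)
            ≤ Submodule.span ℝ (e '' Set.Iio R) := by
          rw [Submodule.span_le]
          rintro x ⟨k, hk, rfl⟩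
          have hkR : k < R := lt_of_le_of_lt (Set.mem_Iic.1 hk) hjR
          by_cases h : gramSchmidt ℝ fs k = 0
          · rw [h]
            exact Submodule.zero_mem _
          · have : gramSchmidt ℝ fs k = ‖gramSchmidt ℝ fs k‖ • e k := by
              rw [hedef]
              simp only [gramSchmidtNormed, RCLike.ofReal_real_eq_id, id_eq]
              rw [smul_inv_smul₀ (norm_ne_zero_iff.2 h)]
            rw [this]
            exact Submodule.smul_mem _ _ (Submodule.subset_span ⟨k, hkR, rfl⟩)
        exact h2 h1
      have hsummem : (∑ i ∈ Finset.range R, ⟪fs j, e i⟫ • e i)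
          ∈ Submodule.span ℝ (e '' Set.Iio R) := by
        refine Submodule.sum_mem _ fun i hi => ?_
        exact Submodule.smul_mem _ _
          (Submodule.subset_span ⟨i, Finset.mem_range.1 hi, rfl⟩)
      have hrmem : r ∈ Submodule.span ℝ (e '' Set.Iio R) := Submodule.sub_mem _ hfsmem hsummem
      have hortho : ∀ k, k < R → ⟪e k, r⟫ = 0 := by
        intro k hkR
        rw [hrdef, inner_sub_right, inner_sum]
        have hsum : (∑ i ∈ Finset.range R, ⟪e k, ⟪fs j, e i⟫ • e i⟫)
            = ⟪fs j, e k⟫ * ‖e k‖ ^ 2 := by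
          rw [Finset.sum_eq_single_of_mem k (Finset.mem_range.2 hkR)]
          · rw [real_inner_smul_right, real_inner_self_eq_norm_sq]
          · intro i _ hik
            rw [real_inner_smul_right, he_orth k i (Ne.symm hik)]
            ring
        rw [hsum]
        rcases he_norm k with h | h
        · simp [h]
        · rw [h, real_inner_comm]
          ring
      have hr0 : r = 0 := by
        have hker2 : Submodule.span ℝ (e '' Set.Iio R) ≤ LinearMap.ker (innerSL ℝ r : H →ₗ[ℝ] ℝ) := by
          rw [Submodule.span_le]
          rintro x ⟨k, hk, rfl⟩
          rw [SetLike.mem_coe, LinearMap.mem_ker]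
          show ⟪r, e k⟫ = 0
          rw [real_inner_comm]
          exact hortho k hk
        have := hker2 hrmem
        rw [LinearMap.mem_ker] at this
        have h2 : ⟪r, r⟫ = 0 := this
        exact inner_self_eq_zero.1 h2
      exact sub_eq_zero.1 hr0
    conv_lhs => rw [hfs_eq]
    rw [sum_inner]
    exact Finset.sum_congr rfl fun i _ => real_inner_smul_left _ _ _
  -- diagonal extraction on the cube of coefficient sequences
  have hmemC : ∀ j i, ⟪fs j, e i⟫ ∈ Set.Icc (-β) β := by
    intro j i
    have h1 : |(⟪fs j, e i⟫ : ℝ)| ≤ β := by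
      refine le_trans (abs_real_inner_le_norm _ _) ?_
      calc ‖fs j‖ * ‖e i‖ ≤ β * 1 :=
            mul_le_mul (hfs j) (he_le i) (norm_nonneg _) hβ.le
        _ = β := mul_one β
    exact abs_le.1 h1
  set xc : ℕ → (∀ _ : ℕ, Set.Icc (-β) β) := fun j i => ⟨⟪fs j, e i⟫, hmemC j i⟩ with hxc
  obtain ⟨A, ψ, hψ, hconv⟩ := SeqCompactSpace.tendsto_subseq xc
  have hcoord : ∀ i, Tendsto (fun k => (⟪fs (ψ k), e i⟫ : ℝ)) atTop (𝓝 (A i : ℝ)) := by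
    intro i
    have h1 : Tendsto (fun k => (xc (ψ k)) i) atTop (𝓝 (A i)) :=
      ((continuous_apply i).tendsto A).comp hconv
    exact (continuous_subtype_val.tendsto (A i)).comp h1
  -- Cauchy property of the inner products along the subsequence
  have hCauchy : ∀ v : H, CauchySeq fun k => (⟪fs (ψ k), v⟫ : ℝ) := by
    intro v
    have hd : Summable fun i => (⟪v, e i⟫ : ℝ) ^ 2 :=
      summable_of_sum_le (fun i => sq_nonneg _) fun s => hbessel v s
    rw [Metric.cauchySeq_iff]
    intro ε hε
    set δ : ℝ := ε / (8 * (β + 1)) with hδdef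
    have hδpos : 0 < δ := by positivity
    -- tail control
    have htails : ∀ᶠ n in atTop,
        (∑' i, (⟪v, e i⟫ : ℝ) ^ 2) - δ ^ 2 < ∑ i ∈ Finset.range n, (⟪v, e i⟫ : ℝ) ^ 2 :=
      (hd.hasSum.tendsto_sum_nat).eventually_const_lt (by nlinarith [hδpos])
    obtain ⟨N, hN⟩ := htails.exists
    have htail : ∀ s : Finset ℕ, (∀ i ∈ s, N ≤ i) → (∑ i ∈ s, (⟪v, e i⟫ : ℝ) ^ 2) < δ ^ 2 := by
      intro s hsN
      have hdisj : Disjoint (Finset.range N) s := by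
        rw [Finset.disjoint_left]
        intro i hi his
        exact absurd (hsN i his) (by simpa using Finset.mem_range.1 hi)
      have hle : (∑ i ∈ Finset.range N ∪ s, (⟪v, e i⟫ : ℝ) ^ 2)
          ≤ ∑' i, (⟪v, e i⟫ : ℝ) ^ 2 :=
        Summable.sum_le_tsum _ (fun i _ => sq_nonneg _) hd
      rw [Finset.sum_union hdisj] at hle
      linarith
    -- head control
    set Bv : ℝ := ∑ i ∈ Finset.range N, |(⟪e i, v⟫ : ℝ)| with hBvdef
    have hBv0 : 0 ≤ Bv := Finset.sum_nonneg fun i _ => abs_nonneg _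
    have hhead : ∀ᶠ k in atTop, ∀ i ∈ Finset.range N,
        |(⟪fs (ψ k), e i⟫ : ℝ) - A i| < ε / (8 * (Bv + 1)) := by
      rw [eventually_all_finset]
      intro i _
      have h1 := Metric.tendsto_atTop.1 (hcoord i) (ε / (8 * (Bv + 1))) (by positivity)
      obtain ⟨K, hK⟩ := h1
      rw [eventually_atTop]
      exact ⟨K, fun k hk => by rw [← Real.dist_eq]; exact hK k hk⟩
    obtain ⟨K, hK⟩ := eventually_atTop.1 hhead
    refine ⟨K, fun k hk k' hk' => ?_⟩
    set a := ψ k with hadef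
    set b := ψ k' with hbdef
    set R : ℕ := max (max a b + 1) N with hRdef
    have haR : a < R := lt_of_lt_of_le (Nat.lt_succ_of_le (le_max_left a b)) (le_max_left _ _)
    have hbR : b < R := lt_of_lt_of_le (Nat.lt_succ_of_le (le_max_right a b)) (le_max_left _ _)
    have hNR : N ≤ R := le_max_right _ _
    rw [Real.dist_eq, hrepr a R haR v, hrepr b R hbR v, ← Finset.sum_sub_distrib]
    have hsubset : Finset.range N ⊆ Finset.range R := by
      intro i hi
      rw [Finset.mem_range] at hi ⊢
      omega
    rw [← Finset.sum_sdiff hsubset]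
    set head : ℝ := ∑ i ∈ Finset.range N,
      ((⟪fs a, e i⟫ : ℝ) * ⟪e i, v⟫ - (⟪fs b, e i⟫ : ℝ) * ⟪e i, v⟫) with hheaddef
    set tail : ℝ := ∑ i ∈ Finset.range R \ Finset.range N,
      ((⟪fs a, e i⟫ : ℝ) * ⟪e i, v⟫ - (⟪fs b, e i⟫ : ℝ) * ⟪e i, v⟫) with htaildef
    have hheadbound : |head| ≤ ε / 4 := by
      rw [hheaddef]
      refine le_trans (Finset.abs_sum_le_sum_abs _ _) ?_
      have hterm : ∀ i ∈ Finset.range N,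
          |(⟪fs a, e i⟫ : ℝ) * ⟪e i, v⟫ - (⟪fs b, e i⟫ : ℝ) * ⟪e i, v⟫|
            ≤ (ε / (4 * (Bv + 1))) * |(⟪e i, v⟫ : ℝ)| := by
        intro i hi
        have h1 := hK k hk i hi
        have h2 := hK k' hk' i hi
        have h3 : |(⟪fs a, e i⟫ : ℝ) - ⟪fs b, e i⟫| ≤ ε / (4 * (Bv + 1)) := by
          calc |(⟪fs a, e i⟫ : ℝ) - ⟪fs b, e i⟫|
              ≤ |(⟪fs a, e i⟫ : ℝ) - A i| + |(⟪fs b, e i⟫ : ℝ) - A i| := by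
                have := abs_sub_le (⟪fs a, e i⟫ : ℝ) (A i : ℝ) (⟪fs b, e i⟫ : ℝ)
                rw [abs_sub_comm ((A i : ℝ)) (⟪fs b, e i⟫ : ℝ)] at this
                exact this
            _ ≤ ε / (8 * (Bv + 1)) + ε / (8 * (Bv + 1)) := add_le_add h1.le h2.le
            _ ≤ ε / (4 * (Bv + 1)) := by
                rw [← add_div, div_le_div_iff₀ (by positivity) (by positivity)]
                nlinarith [hε.le, hBv0]
        calc |(⟪fs a, e i⟫ : ℝ) * ⟪e i, v⟫ - (⟪fs b, e i⟫ : ℝ) * ⟪e i, v⟫|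
            = |(⟪fs a, e i⟫ : ℝ) - ⟪fs b, e i⟫| * |(⟪e i, v⟫ : ℝ)| := by
              rw [← abs_mul]
              ring_nf
          _ ≤ (ε / (4 * (Bv + 1))) * |(⟪e i, v⟫ : ℝ)| :=
              mul_le_mul_of_nonneg_right h3 (abs_nonneg _)
      refine le_trans (Finset.sum_le_sum hterm) ?_
      rw [← Finset.mul_sum, ← hBvdef]
      rw [div_mul_eq_mul_div, div_le_iff₀ (by positivity)]
      nlinarith [hBv0, hε]
    have htailbound : |tail| ≤ ε / 4 := by
      have hCS := Finset.sum_mul_sq_le_sq_mul_sq (Finset.range R \ Finset.range N)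
        (fun i => (⟪fs a, e i⟫ : ℝ) - ⟪fs b, e i⟫) (fun i => (⟪e i, v⟫ : ℝ))
      have htail_eq : tail = ∑ i ∈ Finset.range R \ Finset.range N,
          ((⟪fs a, e i⟫ : ℝ) - ⟪fs b, e i⟫) * ⟪e i, v⟫ := by
        rw [htaildef]
        exact Finset.sum_congr rfl fun i _ => by ring
      have hCsq : (∑ i ∈ Finset.range R \ Finset.range N,
          ((⟪fs a, e i⟫ : ℝ) - ⟪fs b, e i⟫) ^ 2) ≤ 4 * β ^ 2 := by
        have h1 : ∀ i ∈ Finset.range R \ Finset.range N,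
            ((⟪fs a, e i⟫ : ℝ) - ⟪fs b, e i⟫) ^ 2
              ≤ 2 * (⟪fs a, e i⟫ : ℝ) ^ 2 + 2 * (⟪fs b, e i⟫ : ℝ) ^ 2 := by
          intro i _
          nlinarith [sq_nonneg ((⟪fs a, e i⟫ : ℝ) + ⟪fs b, e i⟫)]
        refine le_trans (Finset.sum_le_sum h1) ?_
        rw [Finset.sum_add_distrib, ← Finset.mul_sum, ← Finset.mul_sum]
        have h2 : (∑ i ∈ Finset.range R \ Finset.range N, (⟪fs a, e i⟫ : ℝ) ^ 2) ≤ β ^ 2 := by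
          refine le_trans (hbessel (fs a) (Finset.range R \ Finset.range N)) ?_
          nlinarith [hfs a, norm_nonneg (fs a)]
        have h3 : (∑ i ∈ Finset.range R \ Finset.range N, (⟪fs b, e i⟫ : ℝ) ^ 2) ≤ β ^ 2 := by
          refine le_trans (hbessel (fs b) (Finset.range R \ Finset.range N)) ?_
          nlinarith [hfs b, norm_nonneg (fs b)]
        linarith
      have hdsq : (∑ i ∈ Finset.range R \ Finset.range N, (⟪e i, v⟫ : ℝ) ^ 2) ≤ δ ^ 2 := by
        have h1 : (∑ i ∈ Finset.range R \ Finset.range N, (⟪e i, v⟫ : ℝ) ^ 2)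
            = ∑ i ∈ Finset.range R \ Finset.range N, (⟪v, e i⟫ : ℝ) ^ 2 :=
          Finset.sum_congr rfl fun i _ => by rw [real_inner_comm]
        rw [h1]
        refine le_of_lt (htail _ fun i hi => ?_)
        have := (Finset.mem_sdiff.1 hi).2
        rw [Finset.mem_range] at this
        omega
      have hsq : tail ^ 2 ≤ (2 * β * δ) ^ 2 := by
        rw [htail_eq]
        calc (∑ i ∈ Finset.range R \ Finset.range N,
              ((⟪fs a, e i⟫ : ℝ) - ⟪fs b, e i⟫) * ⟪e i, v⟫) ^ 2
            ≤ (∑ i ∈ Finset.range R \ Finset.range N,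
                ((⟪fs a, e i⟫ : ℝ) - ⟪fs b, e i⟫) ^ 2)
              * ∑ i ∈ Finset.range R \ Finset.range N, (⟪e i, v⟫ : ℝ) ^ 2 := hCS
          _ ≤ (4 * β ^ 2) * δ ^ 2 := by
              refine mul_le_mul hCsq hdsq (Finset.sum_nonneg fun i _ => sq_nonneg _) ?_
              positivity
          _ = (2 * β * δ) ^ 2 := by ring
      have h2βδ : 2 * β * δ ≤ ε / 4 := by
        rw [hδdef]
        have heq : 2 * β * (ε / (8 * (β + 1))) = 2 * β * ε / (8 * (β + 1)) := by ring
        rw [heq, div_le_div_iff₀ (by positivity) (by norm_num)]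
        nlinarith [hε.le, hβ.le]
      have habs : |tail| ≤ 2 * β * δ := by
        have h0 : 0 ≤ 2 * β * δ := by positivity
        nlinarith [sq_abs tail, abs_nonneg tail]
      linarith
    calc |tail + head| ≤ |tail| + |head| := abs_add_le _ _
      _ ≤ ε / 4 + ε / 4 := add_le_add htailbound hheadbound
      _ < ε := by linarith
  -- pass to the limit
  have hex : ∀ v : H, ∃ L : ℝ, Tendsto (fun k => (⟪fs (ψ k), v⟫ : ℝ)) atTop (𝓝 L) :=
    fun v => cauchySeq_tendsto_of_complete (hCauchy v)
  choose τ hτ using hex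
  refine ⟨ψ, hψ, τ, ?_, hτ⟩
  intro v w
  have h1 : ∀ k, |(⟪fs (ψ k), v⟫ : ℝ) - ⟪fs (ψ k), w⟫| ≤ β * ‖v - w‖ := by
    intro k
    rw [← inner_sub_right]
    refine le_trans (abs_real_inner_le_norm _ _) ?_
    exact mul_le_mul_of_nonneg_right (hfs _) (norm_nonneg _)
  have h2 : Tendsto (fun k => |(⟪fs (ψ k), v⟫ : ℝ) - ⟪fs (ψ k), w⟫|) atTop
      (𝓝 |τ v - τ w|) := ((hτ v).sub (hτ w)).abs
  exact le_of_tendsto h2 (Eventually.of_forall h1)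

end WeakLimit


/-- auxiliary: properties of the `[0,1]`-combination used in the Baire argument. -/
lemma auxCombo {Z : Type*} [TopologicalSpace Z]
    (v : ℕ → Z → ℝ) (hvc : ∀ m, Continuous (v m)) (hv0 : ∀ m z, 0 ≤ v m z)
    (hv1 : ∀ m z, v m z ≤ 1) (a : ℕ → ℝ) (ha : ∀ i, a i ∈ Set.Icc (0:ℝ) 1) :
    Continuous (fun z => ∑' i, a i * ((1/2:ℝ)^(i+1) * v i z)) ∧
    (∀ z, ‖∑' i, a i * ((1/2:ℝ)^(i+1) * v i z)‖ ≤ 1) ∧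
    (∀ {m : MeasurableSpace Z} (μ : Measure Z), (∀ i, AEMeasurable (v i) μ) →
      AEMeasurable (fun z => ∑' i, a i * ((1/2:ℝ)^(i+1) * v i z)) μ) := by
  have hwpos : ∀ i : ℕ, (0:ℝ) < (1/2:ℝ)^(i+1) := fun i => by positivity
  have hw : Summable fun i : ℕ => ((1:ℝ)/2)^(i+1) := by
    have h2 : Summable fun i : ℕ => ((1:ℝ)/2)^i * (1/2) := summable_geometric_two.mul_right _
    refine h2.congr fun i => ?_
    show (1/2:ℝ) ^ i * (1 / 2) = (1/2:ℝ) ^ (i+1)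
    rw [pow_succ]
  have hwsum : (∑' i : ℕ, ((1:ℝ)/2)^(i+1)) = 1 := by
    have h2 : (∑' i : ℕ, ((1:ℝ)/2)^(i+1)) = ∑' i : ℕ, (1:ℝ) / 2 / 2 ^ i := by
      refine tsum_congr fun i => ?_
      rw [pow_succ, div_pow, one_pow]
      ring
    rw [h2, tsum_geometric_two' 1]
  have hterm_le : ∀ i z, a i * ((1/2:ℝ)^(i+1) * v i z) ≤ (1/2:ℝ)^(i+1) := by
    intro i z
    calc a i * ((1/2:ℝ)^(i+1) * v i z) ≤ 1 * ((1/2:ℝ)^(i+1) * 1) := by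
          apply mul_le_mul (ha i).2 ?_ (mul_nonneg (hwpos i).le (hv0 i z)) zero_le_one
          exact mul_le_mul_of_nonneg_left (hv1 i z) (hwpos i).le
      _ = (1/2:ℝ)^(i+1) := by ring
  have hterm_nn : ∀ i z, 0 ≤ a i * ((1/2:ℝ)^(i+1) * v i z) := fun i z =>
    mul_nonneg (ha i).1 (mul_nonneg (hwpos i).le (hv0 i z))
  have hsum : ∀ z, Summable fun i => a i * ((1/2:ℝ)^(i+1) * v i z) := fun z =>
    Summable.of_nonneg_of_le (fun i => hterm_nn i z) (fun i => hterm_le i z) hw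
  refine ⟨?_, ?_, ?_⟩
  · apply continuous_tsum (fun i => continuous_const.mul (continuous_const.mul (hvc i))) hw
    intro i z
    show ‖a i * ((1/2:ℝ)^(i+1) * v i z)‖ ≤ (1/2:ℝ)^(i+1)
    rw [Real.norm_eq_abs, abs_of_nonneg (hterm_nn i z)]
    exact hterm_le i z
  · intro z
    rw [Real.norm_eq_abs, abs_of_nonneg (tsum_nonneg fun i => hterm_nn i z)]
    calc (∑' i, a i * ((1/2:ℝ)^(i+1) * v i z)) ≤ ∑' i, ((1:ℝ)/2)^(i+1) :=
          Summable.tsum_le_tsum (fun i => hterm_le i z) (hsum z) hw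
      _ = 1 := hwsum
  · intro m μ hv
    apply aemeasurable_of_tendsto_metrizable_ae atTop
      (f := fun n z => ∑ i ∈ Finset.range n, a i * ((1/2:ℝ)^(i+1) * v i z))
    · intro n
      apply Finset.aemeasurable_fun_sum
      intro i _
      exact (((hv i).const_mul _).const_mul _)
    · exact ae_of_all _ fun z => (hsum z).hasSum.tendsto_sum_nat


/-- The optimal expected risk `ϑ(P) = inf_{f ∈ F} E_P[c(z, f(x))]`, where the
hypothesis `f` belongs to the RKHS `H` with feature map `Φ`, so that
`f(x) = ⟪f, Φ x⟫ = ⟪f, k(·,x)⟫`. -/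
def optRisk {X Y H : Type*} [NormedAddCommGroup X] [NormedAddCommGroup Y]
    [MeasurableSpace X] [MeasurableSpace Y]
    [NormedAddCommGroup H] [InnerProductSpace ℝ H]
    (Φ : X → H) (F : Set H) (c : X × Y → ℝ → ℝ) (P : Measure (X × Y)) : ℝ :=
  sInf ((fun f : H => ∫ z, c z ⟪f, Φ z.1⟫ ∂P) '' F)

set_option maxHeartbeats 2000000 in
/-- under Assumptions A and B, for any `p ≥ 1`, the optimal expected risk
`ϑ` is continuous at `P` with respect to `φ^p`-weak convergence: if `P_l, P ∈ M_Z^{φ^p}`,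
`P_l → P` weakly and `∫ φ^p dP_l → ∫ φ^p dP`, then `ϑ(P_l) → ϑ(P)`. -/
theorem stmt0
    {X Y H : Type*} [NormedAddCommGroup X] [NormedAddCommGroup Y]
    [MeasurableSpace X] [MeasurableSpace Y]
    [NormedAddCommGroup H] [InnerProductSpace ℝ H]
    (Φ : X → H) (F : Set H) (c : X × Y → ℝ → ℝ)
    -- the cost function is nonnegative
    (hc_nonneg : ∀ z t, 0 ≤ c z t)
    -- Assumption A (a): equicontinuity of `{k(·,x) : x ∈ X₀}` for compact `Z₀`,
    -- where `X₀` is the projection of `Z₀` on `X` and `‖k(·,x') - k(·,x)‖_k = ‖Φ x' - Φ x‖`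
    (hAa : ∀ Z₀ : Set (X × Y), IsCompact Z₀ → ∀ ε > 0, ∃ η > 0,
      ∀ x ∈ Prod.fst '' Z₀, ∀ x' ∈ Prod.fst '' Z₀, ‖x' - x‖ < η → ‖Φ x' - Φ x‖ < ε)
    -- Assumption A (b): the hypothesis set is norm-bounded by `β`
    (β : ℝ) (hβ : 0 < β) (hAb : ∀ f ∈ F, ‖f‖ ≤ β)
    -- Assumption B (a): `φ` is a continuous nonnegative gauge function dominating the cost
    (φ : X × Y → ℝ) (hφ_cont : Continuous φ) (hφ_nonneg : ∀ z, 0 ≤ φ z)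
    (hφ_gauge : ∃ K : Set (X × Y), IsCompact K ∧ ∀ z ∉ K, 1 ≤ φ z)
    (hBa : ∀ f ∈ F, ∀ z : X × Y, c z ⟪f, Φ z.1⟫ ≤ φ z)
    (hφ_coercive : ∀ M : ℝ, ∃ r : ℝ, ∀ z : X × Y, r ≤ ‖z‖ → M ≤ φ z)
    -- Assumption B (b): `c` is (jointly) continuous
    (hBb : Continuous fun q : (X × Y) × ℝ => c q.1 q.2)
    -- the exponent `p ≥ 1`
    (p : ℝ) (hp : 1 ≤ p)
    -- the sequence of probability measures and its limit, all in `M_Z^{φ^p}`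
    (P : ℕ → Measure (X × Y)) (Plim : Measure (X × Y))
    [∀ l, IsProbabilityMeasure (P l)] [IsProbabilityMeasure Plim]
    (hPmom : ∀ l, Integrable (fun z => φ z ^ p) (P l))
    (hPlimmom : Integrable (fun z => φ z ^ p) Plim)
    -- `P_l → P` weakly
    (hweak : ∀ g : BoundedContinuousFunction (X × Y) ℝ,
      Tendsto (fun l => ∫ z, g z ∂(P l)) atTop (𝓝 (∫ z, g z ∂Plim)))
    -- `∫ φ^p dP_l → ∫ φ^p dP`
    (hmom : Tendsto (fun l => ∫ z, φ z ^ p ∂(P l)) atTop (𝓝 (∫ z, φ z ^ p ∂Plim))) :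
    Tendsto (fun l => optRisk Φ F c (P l)) atTop (𝓝 (optRisk Φ F c Plim)) := by
  classical
  rcases isEmpty_or_nonempty (X × Y) with hempty | hne
  · exfalso
    have h1 : Plim Set.univ = 1 := measure_univ
    rw [Set.univ_eq_empty_iff.2 hempty, measure_empty] at h1
    exact absurd h1 (by norm_num)
  rcases Set.eq_empty_or_nonempty F with hF | hFne
  · simp only [optRisk, hF, Set.image_empty, Real.sInf_empty]
    exact tendsto_const_nhds
  obtain ⟨z₀⟩ := hne
  set g : H → (X × Y) → ℝ := fun f z => c z ⟪f, Φ z.1⟫ with hgdef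
  have hoptR : ∀ μ : Measure (X × Y),
      optRisk Φ F c μ = sInf ((fun f => ∫ z, g f z ∂μ) '' F) := fun μ => rfl
  have hΦc : Continuous Φ := auxPhi_continuous Φ hAa z₀.2
  have hgc : ∀ f : H, Continuous (g f) := by
    intro f
    have h1 : Continuous fun z : X × Y => ((z, (⟪f, Φ z.1⟫ : ℝ)) : (X × Y) × ℝ) :=
      continuous_id.prodMk (Continuous.inner continuous_const (hΦc.comp continuous_fst))
    exact hBb.comp h1
  have hg0 : ∀ (f : H) (z : X × Y), 0 ≤ g f z := fun f z => hc_nonneg _ _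
  have hgφ : ∀ f ∈ F, ∀ z : X × Y, g f z ≤ φ z := hBa
  have hI0 : ∀ (f : H) (μ : Measure (X × Y)), 0 ≤ ∫ z, g f z ∂μ :=
    fun f μ => integral_nonneg (hg0 f)
  have hbdd : ∀ μ : Measure (X × Y), BddBelow ((fun f => ∫ z, g f z ∂μ) '' F) := by
    intro μ
    exact ⟨0, by rintro x ⟨f, hf, rfl⟩; exact hI0 f μ⟩
  have hne' : ∀ μ : Measure (X × Y), ((fun f => ∫ z, g f z ∂μ) '' F).Nonempty :=
    fun μ => hFne.image _
  have hp0 : (0:ℝ) < p := lt_of_lt_of_le one_pos hp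
  have hφaem : ∀ (μ : Measure (X × Y)), Integrable (fun z => φ z ^ p) μ → AEMeasurable φ μ := by
    intro μ hmomμ
    have h1 : (fun z => (φ z ^ p) ^ p⁻¹) = φ := by
      funext z
      exact Real.rpow_rpow_inv (hφ_nonneg z) (ne_of_gt hp0)
    rw [← h1]
    have hmrpow : Measurable fun t : ℝ => t ^ p⁻¹ := by measurability
    exact hmrpow.comp_aemeasurable hmomμ.aemeasurable
  have hφint : ∀ (μ : Measure (X × Y)), IsProbabilityMeasure μ →
      Integrable (fun z => φ z ^ p) μ → Integrable φ μ := by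
    intro μ _ hmomμ
    have hb : ∀ z, ‖φ z‖ ≤ 1 + φ z ^ p := by
      intro z
      rw [Real.norm_eq_abs, abs_of_nonneg (hφ_nonneg z)]
      rcases le_or_gt (φ z) 1 with h | h
      · have := Real.rpow_nonneg (hφ_nonneg z) p
        linarith
      · have h2 : φ z ^ (1:ℝ) ≤ φ z ^ p := Real.rpow_le_rpow_of_exponent_le h.le hp
        rw [Real.rpow_one] at h2
        linarith
    exact Integrable.mono' ((integrable_const 1).add hmomμ)
      (hφaem μ hmomμ).aestronglyMeasurable (Eventually.of_forall hb)
  have hφintP : ∀ l, Integrable φ (P l) := fun l => hφint (P l) inferInstance (hPmom l)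
  have hφintPlim : Integrable φ Plim := hφint Plim inferInstance hPlimmom
  have hgint : ∀ f ∈ F, ∀ (μ : Measure (X × Y)), Integrable φ μ →
      AEMeasurable (g f) μ → Integrable (g f) μ := by
    intro f hf μ hφi haem
    refine Integrable.mono' hφi haem.aestronglyMeasurable (Eventually.of_forall fun z => ?_)
    rw [Real.norm_eq_abs, abs_of_nonneg (hg0 f z)]
    exact hgφ f hf z
  by_cases hhon : ∀ f ∈ F, AEMeasurable (g f) Plim
  swap
  -- CASE (i): junky limit measure
  · push_neg at hhon
    obtain ⟨f₀, hf₀F, hf₀junk⟩ := hhon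
    have hteq : optRisk Φ F c Plim = 0 := by
      rw [hoptR]
      apply auxSInf_eq_zero
      · exact ⟨f₀, hf₀F, integral_undef fun hi => hf₀junk hi.aemeasurable⟩
      · rintro x ⟨f, hf, rfl⟩
        exact hI0 f Plim
    rw [hteq]
    set u₀fun : (X × Y) → ℝ := fun z => auxRho (g f₀ z) with hu₀def
    have hu₀c : Continuous u₀fun := auxRho_cont.comp (hgc f₀)
    set u₀ : BoundedContinuousFunction (X × Y) ℝ :=
      BoundedContinuousFunction.ofNormedAddCommGroup u₀fun hu₀c 1
        (fun z => by rw [Real.norm_eq_abs]; exact auxRho_le_one _) with hu₀'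
    have hcoe : ⇑u₀ = u₀fun := rfl
    have hu₀junk : ¬ AEMeasurable (⇑u₀) Plim := by
      rw [hcoe]
      intro h
      exact hf₀junk ((auxRho_aemeasurable_iff _).1 h)
    have hev := auxSync_junk hweak u₀ hu₀junk
    have hev2 : ∀ᶠ l in atTop, optRisk Φ F c (P l) = 0 := by
      filter_upwards [hev] with l hl
      rw [hoptR]
      apply auxSInf_eq_zero
      · refine ⟨f₀, hf₀F, integral_undef fun hi => ?_⟩
        apply hl
        rw [hcoe]
        exact (auxRho_aemeasurable_iff _).2 hi.aemeasurable
      · rintro x ⟨f, hf, rfl⟩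
        exact hI0 f (P l)
    exact Tendsto.congr' (hev2.mono fun l hl => hl.symm) tendsto_const_nhds
  -- CASE (ii): honest limit measure
  -- Junk exclusion via Baire category
  have hJE : ∀ᶠ l in atTop, ∀ f ∈ F, AEMeasurable (g f) (P l) := by
    by_contra hcon
    rw [Filter.not_eventually] at hcon
    obtain ⟨lseq, hlmono, hlprop⟩ := Filter.extraction_of_frequently_atTop hcon
    have hex : ∀ m, ∃ f, f ∈ F ∧ ¬ AEMeasurable (g f) (P (lseq m)) := by
      intro m
      have h1 := hlprop m
      push_neg at h1
      exact h1
    choose fk hfkF hfkjunk using hex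
    set v : ℕ → (X × Y) → ℝ := fun m z => auxRho (g (fk m) z) with hvdef
    have hvc : ∀ m, Continuous (v m) := fun m => auxRho_cont.comp (hgc (fk m))
    have hv0 : ∀ m z, 0 ≤ v m z := fun m z => auxRho_nonneg (hg0 _ _)
    have hv1 : ∀ m z, v m z ≤ 1 := fun m z => (abs_le.1 (auxRho_le_one (g (fk m) z))).2
    have hvjunk : ∀ m, ¬ AEMeasurable (v m) (P (lseq m)) := by
      intro m h
      exact hfkjunk m ((auxRho_aemeasurable_iff _).1 h)
    obtain ⟨a, ha01, hafreq⟩ := auxBaire (fun m => P (lseq m)) v hvc hv0 hv1 hvjunk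
    obtain ⟨hGc, hGb1, hGaem⟩ := auxCombo v hvc hv0 hv1 a ha01
    set Gfun : (X × Y) → ℝ := fun z => ∑' i, a i * ((1/2:ℝ)^(i+1) * v i z) with hGdef
    set Gb : BoundedContinuousFunction (X × Y) ℝ :=
      BoundedContinuousFunction.ofNormedAddCommGroup Gfun hGc 1 hGb1 with hGb'
    have hGcoe : ⇑Gb = Gfun := rfl
    have hGhon : AEMeasurable (⇑Gb) Plim := by
      rw [hGcoe]
      exact hGaem Plim fun i => (auxRho_aemeasurable_iff _).2 (hhon _ (hfkF i))
    have hGev := auxSync_honest hweak Gb hGhon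
    have hfreq' : ∃ᶠ l in atTop, ¬ AEMeasurable Gfun (P l) :=
      (hlmono.tendsto_atTop).frequently hafreq
    obtain ⟨l, hl1, hl2⟩ := (hfreq'.and_eventually hGev).exists
    exact hl1 hl2
  set θ : ℝ := optRisk Φ F c Plim with hθdef
  -- truncation bounded continuous functions
  have hmin_norm : ∀ (f : H) (M : ℝ), 0 ≤ M → ∀ z, ‖min (g f z) M‖ ≤ M := by
    intro f M hM z
    rw [Real.norm_eq_abs, abs_of_nonneg (le_min (hg0 f z) hM)]
    exact min_le_right _ _
  have hφp_cont : Continuous fun z : X × Y => φ z ^ p :=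
    hφ_cont.rpow_const fun z => Or.inr hp0.le
  have hφp_nn : ∀ z : X × Y, 0 ≤ φ z ^ p := fun z => Real.rpow_nonneg (hφ_nonneg z) p
  -- tail control
  have hminφ_int : ∀ (M : ℝ), 0 ≤ M → ∀ (μ : Measure (X × Y)), IsProbabilityMeasure μ →
      Integrable (fun z => φ z ^ p) μ → Integrable (fun z => min (φ z ^ p) M) μ := by
    intro M hM μ hμ hmomμ
    refine Integrable.mono' (integrable_const M) (hmomμ.aemeasurable.min aemeasurable_const).aestronglyMeasurable
      (Eventually.of_forall fun z => ?_)
    rw [Real.norm_eq_abs, abs_of_nonneg (le_min (hφp_nn z) hM)]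
    exact min_le_right _ _
  have htail_l : ∀ (M : ℝ), 0 ≤ M →
      Tendsto (fun l => ∫ z, (φ z ^ p - min (φ z ^ p) M) ∂(P l)) atTop
        (𝓝 (∫ z, (φ z ^ p - min (φ z ^ p) M) ∂Plim)) := by
    intro M hM
    set φM : BoundedContinuousFunction (X × Y) ℝ :=
      BoundedContinuousFunction.ofNormedAddCommGroup (fun z => min (φ z ^ p) M)
        (hφp_cont.min continuous_const) M
        (fun z => by
          rw [Real.norm_eq_abs, abs_of_nonneg (le_min (hφp_nn z) hM)]
          exact min_le_right _ _) with hφM'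
    have hsplit : ∀ (μ : Measure (X × Y)), IsProbabilityMeasure μ →
        Integrable (fun z => φ z ^ p) μ →
        (∫ z, (φ z ^ p - min (φ z ^ p) M) ∂μ)
          = (∫ z, φ z ^ p ∂μ) - ∫ z, φM z ∂μ := by
      intro μ hμ hmomμ
      exact integral_sub hmomμ (hminφ_int M hM μ hμ hmomμ)
    have h1 : Tendsto (fun l => (∫ z, φ z ^ p ∂(P l)) - ∫ z, φM z ∂(P l)) atTop
        (𝓝 ((∫ z, φ z ^ p ∂Plim) - ∫ z, φM z ∂Plim)) := hmom.sub (hweak φM)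
    have h2 := hsplit Plim inferInstance hPlimmom
    rw [← h2] at h1
    refine h1.congr fun l => ?_
    rw [hsplit (P l) inferInstance (hPmom l)]
  have htail_0 : Tendsto (fun M : ℕ => ∫ z, (φ z ^ p - min (φ z ^ p) (M:ℝ)) ∂Plim) atTop
      (𝓝 0) := by
    have h1 : Tendsto (fun M : ℕ => ∫ z, (φ z ^ p - min (φ z ^ p) (M:ℝ)) ∂Plim) atTop
        (𝓝 (∫ z, (0:ℝ) ∂Plim)) := by
      apply tendsto_integral_of_dominated_convergence (fun z => φ z ^ p)
      · intro M
        exact (hPlimmom.aemeasurable.sub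
          (hPlimmom.aemeasurable.min aemeasurable_const)).aestronglyMeasurable
      · exact hPlimmom
      · intro M
        refine Eventually.of_forall fun z => ?_
        rw [Real.norm_eq_abs, abs_of_nonneg (by
          have := min_le_left (φ z ^ p) (M:ℝ)
          linarith)]
        have h3 : 0 ≤ min (φ z ^ p) (M:ℝ) := le_min (hφp_nn z) (Nat.cast_nonneg M)
        linarith
      · refine Eventually.of_forall fun z => ?_
        have h4 := auxMin_tendsto_self (b := φ z ^ p) trivial
        have h5 : Tendsto (fun M : ℕ => φ z ^ p - min (φ z ^ p) (M:ℝ)) atTop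
            (𝓝 (φ z ^ p - φ z ^ p)) := tendsto_const_nhds.sub h4
        simpa using h5
    simpa using h1
  have hptwise : ∀ (M : ℝ), 1 ≤ M → ∀ f ∈ F, ∀ z : X × Y,
      g f z - min (g f z) M ≤ φ z ^ p - min (φ z ^ p) M := by
    intro M hM f hf z
    rcases le_or_gt (g f z) M with h | h
    · rw [min_eq_left h, sub_self]
      exact sub_nonneg.2 (min_le_left _ _)
    · rw [min_eq_right h.le]
      have hgφz := hgφ f hf z
      have hφ1 : 1 ≤ φ z := le_trans hM (le_trans h.le hgφz)
      have hφp2 : φ z ≤ φ z ^ p := by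
        have h2 := Real.rpow_le_rpow_of_exponent_le hφ1 hp
        rwa [Real.rpow_one] at h2
      have hMp : M ≤ φ z ^ p := le_trans (le_trans h.le hgφz) hφp2
      rw [min_eq_right hMp]
      linarith
  -- UPPER bound
  have hupper : ∀ ε : ℝ, 0 < ε → ∀ᶠ l in atTop, optRisk Φ F c (P l) < θ + ε := by
    intro ε hε
    have h1 : sInf ((fun f => ∫ z, g f z ∂Plim) '' F) < θ + ε/3 := by
      rw [hθdef, hoptR]
      linarith
    obtain ⟨x, ⟨f, hfF, rfl⟩, hfx⟩ := exists_lt_of_csInf_lt (hne' Plim) h1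
    obtain ⟨M₀, hM₀, hM₀1⟩ :=
      ((htail_0.eventually_lt_const (show (0:ℝ) < ε/3 by positivity)).and
        (eventually_ge_atTop 1)).exists
    set M : ℝ := (M₀ : ℝ) with hMdef
    have hM1 : (1:ℝ) ≤ M := Nat.one_le_cast.2 hM₀1
    have hM0 : (0:ℝ) ≤ M := by linarith
    set gM : BoundedContinuousFunction (X × Y) ℝ :=
      BoundedContinuousFunction.ofNormedAddCommGroup (fun z => min (g f z) M)
        ((hgc f).min continuous_const) M (hmin_norm f M hM0) with hgM'
    have hlim1 := hweak gM
    have hintg : Integrable (g f) Plim := hgint f hfF Plim hφintPlim (hhon f hfF)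
    have hintmin : Integrable (fun z => min (g f z) M) Plim := by
      refine Integrable.mono' (integrable_const M)
        ((hhon f hfF).min aemeasurable_const).aestronglyMeasurable
        (Eventually.of_forall fun z => hmin_norm f M hM0 z)
    have hlt1 : (∫ z, gM z ∂Plim) < θ + ε/3 := by
      have h2 : (∫ z, gM z ∂Plim) ≤ ∫ z, g f z ∂Plim := by
        apply integral_mono hintmin hintg
        intro z
        exact min_le_left _ _
      linarith
    have hev1 := hlim1.eventually_lt_const hlt1
    have hev2 := (htail_l M hM0).eventually_lt_const hM₀
    filter_upwards [hev1, hev2, hJE] with l h1l h2l h3l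
    have haem := h3l f hfF
    have hint_g : Integrable (g f) (P l) := hgint f hfF (P l) (hφintP l) haem
    have hint_min : Integrable (fun z => min (g f z) M) (P l) := by
      refine Integrable.mono' (integrable_const M)
        (haem.min aemeasurable_const).aestronglyMeasurable
        (Eventually.of_forall fun z => hmin_norm f M hM0 z)
    have hint_φmin : Integrable (fun z => min (φ z ^ p) M) (P l) :=
      hminφ_int M hM0 (P l) inferInstance (hPmom l)
    have hint_diff : Integrable (fun z => g f z - min (g f z) M) (P l) :=
      hint_g.sub hint_min
    have hsplit : (∫ z, g f z ∂(P l))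
        = (∫ z, min (g f z) M ∂(P l)) + ∫ z, (g f z - min (g f z) M) ∂(P l) := by
      rw [← integral_add hint_min hint_diff]
      refine integral_congr_ae (Eventually.of_forall fun z => ?_)
      ring
    have htb : (∫ z, (g f z - min (g f z) M) ∂(P l))
        ≤ ∫ z, (φ z ^ p - min (φ z ^ p) M) ∂(P l) := by
      apply integral_mono hint_diff ((hPmom l).sub hint_φmin)
      intro z
      exact hptwise M hM1 f hfF z
    calc optRisk Φ F c (P l) ≤ ∫ z, g f z ∂(P l) := by
          rw [hoptR]
          exact csInf_le (hbdd _) ⟨f, hfF, rfl⟩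
      _ = (∫ z, min (g f z) M ∂(P l)) + ∫ z, (g f z - min (g f z) M) ∂(P l) := hsplit
      _ < (θ + ε/3) + ε/3 := by
          have h5 : (∫ z, min (g f z) M ∂(P l)) < θ + ε/3 := h1l
          have h6 : (∫ z, (g f z - min (g f z) M) ∂(P l)) < ε/3 := lt_of_le_of_lt htb h2l
          exact add_lt_add h5 h6
      _ < θ + ε := by linarith
  -- LOWER bound
  have hlower : ∀ ε : ℝ, 0 < ε → ∀ᶠ l in atTop, θ - ε < optRisk Φ F c (P l) := by
    intro ε hε
    by_contra hcon
    rw [Filter.not_eventually] at hcon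
    have hfreq := hcon.and_eventually hJE
    obtain ⟨lseq, hlmono, hlprop⟩ := Filter.extraction_of_frequently_atTop hfreq
    have hex : ∀ k, ∃ f, f ∈ F ∧ (∫ z, g f z ∂(P (lseq k))) < θ - ε/2 := by
      intro k
      have h1 : ¬ (θ - ε < optRisk Φ F c (P (lseq k))) := (hlprop k).1
      push_neg at h1
      rw [hoptR] at h1
      have h2 : sInf ((fun f => ∫ z, g f z ∂(P (lseq k))) '' F) < θ - ε/2 := by linarith
      obtain ⟨x, ⟨f, hfF, rfl⟩, hx⟩ := exists_lt_of_csInf_lt (hne' _) h2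
      exact ⟨f, hfF, hx⟩
    choose fk hfkF hfkmin using hex
    obtain ⟨ψ, hψ, τ, hτlip, hτconv⟩ := auxWeakLimit β hβ fk (fun k => hAb _ (hfkF k))
    set msel : ℕ → ℕ := fun k => lseq (ψ k) with hmdef
    have hmmono : StrictMono msel := hlmono.comp hψ
    set gbar : (X × Y) → ℝ := fun z => c z (τ (Φ z.1)) with hgbardef
    have hconv : ∀ z : X × Y, Tendsto (fun k => g (fk (ψ k)) z) atTop (𝓝 (gbar z)) := by
      intro z
      have h1 : Tendsto (fun k => ((z, (⟪fk (ψ k), Φ z.1⟫ : ℝ)) : (X × Y) × ℝ)) atTop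
          (𝓝 (z, τ (Φ z.1))) := tendsto_const_nhds.prodMk_nhds (hτconv (Φ z.1))
      exact ((hBb.tendsto _).comp h1 : _)
    have hgbar0 : ∀ z, 0 ≤ gbar z := fun z =>
      ge_of_tendsto (hconv z) (Eventually.of_forall fun k => hg0 _ _)
    have hgbarφ : ∀ z, gbar z ≤ φ z := fun z =>
      le_of_tendsto (hconv z) (Eventually.of_forall fun k => hgφ _ (hfkF _) z)
    have hgbaraem : AEMeasurable gbar Plim :=
      aemeasurable_of_tendsto_metrizable_ae atTop (fun k => hhon _ (hfkF (ψ k)))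
        (ae_of_all _ hconv)
    have hθle : θ ≤ ∫ z, gbar z ∂Plim := by
      have h1 : Tendsto (fun k => ∫ z, g (fk (ψ k)) z ∂Plim) atTop
          (𝓝 (∫ z, gbar z ∂Plim)) := by
        apply tendsto_integral_of_dominated_convergence φ
          (fun k => (hhon _ (hfkF (ψ k))).aestronglyMeasurable) hφintPlim
        · intro k
          refine Eventually.of_forall fun z => ?_
          rw [Real.norm_eq_abs, abs_of_nonneg (hg0 _ _)]
          exact hgφ _ (hfkF _) z
        · exact ae_of_all _ hconv
      refine ge_of_tendsto h1 (Eventually.of_forall fun k => ?_)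
      rw [hθdef, hoptR]
      exact csInf_le (hbdd _) ⟨fk (ψ k), hfkF _, rfl⟩
    have hMstep : ∀ M : ℕ, (∫ z, min (gbar z) (M:ℝ) ∂Plim) ≤ θ - ε/2 := by
      intro M
      have hMnn : (0:ℝ) ≤ (M:ℝ) := Nat.cast_nonneg M
      set hKfun : ℕ → (X × Y) → ℝ :=
        fun K z => ⨅ j : ℕ, min (g (fk (ψ (K + j))) z) (M:ℝ) with hKdef
      have hminnn : ∀ K j z, 0 ≤ min (g (fk (ψ (K + j))) z) (M:ℝ) :=
        fun K j z => le_min (hg0 _ _) hMnn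
      have hbbK : ∀ K z, BddBelow (Set.range fun j => min (g (fk (ψ (K + j))) z) (M:ℝ)) :=
        fun K z => ⟨0, by rintro x ⟨j, rfl⟩; exact hminnn K j z⟩
      have hK0 : ∀ K z, 0 ≤ hKfun K z := fun K z => le_ciInf fun j => hminnn K j z
      have hKM : ∀ K z, hKfun K z ≤ (M:ℝ) :=
        fun K z => le_trans (ciInf_le (hbbK K z) 0) (min_le_right _ _)
      have hKcont : ∀ K, Continuous (hKfun K) := by
        intro K
        apply auxInf_continuous _ (fun j z => hminnn K j z)
        intro w₀ ε' hε'
        obtain ⟨δ, hδ, hkey⟩ := auxEquicont Φ hΦc c hBb β hβ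
          (fun (j : ℕ) (v : H) => (⟪fk (ψ (K + j)), v⟫ : ℝ))
          (fun j v w => by
            rw [← inner_sub_right]
            refine le_trans (abs_real_inner_le_norm _ _) ?_
            exact mul_le_mul_of_nonneg_right (hAb _ (hfkF _)) (norm_nonneg _))
          (fun j => inner_zero_right _) w₀ hε'
        refine ⟨δ, hδ, fun z hz j => ?_⟩
        refine le_trans ?_ (hkey z hz j)
        refine le_trans (abs_min_sub_min_le_max _ _ _ _) ?_
        simp only [sub_self, abs_zero]
        exact max_le (le_refl _) (abs_nonneg _)
      set hKbcf : ℕ → BoundedContinuousFunction (X × Y) ℝ := fun K =>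
        BoundedContinuousFunction.ofNormedAddCommGroup (hKfun K) (hKcont K) (M:ℝ)
          (fun z => by
            rw [Real.norm_eq_abs, abs_of_nonneg (hK0 K z)]
            exact hKM K z) with hKbcf'
      have hKaem : ∀ K (μ : Measure (X × Y)), (∀ f ∈ F, AEMeasurable (g f) μ) →
          AEMeasurable (hKfun K) μ := by
        intro K μ hμ
        apply auxAEMeasurable_iInf
        intro j
        exact (hμ _ (hfkF (ψ (K + j)))).min aemeasurable_const
      have hKbound : ∀ K, (∫ z, hKfun K z ∂Plim) ≤ θ - ε/2 := by
        intro K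
        have hlim := hweak (hKbcf K)
        have hfr : ∃ᶠ l in atTop, (∫ z, hKfun K z ∂(P l)) ∈ Set.Iic (θ - ε/2) := by
          have h1 : ∀ᶠ k in atTop, (∫ z, hKfun K z ∂(P (msel k))) ∈ Set.Iic (θ - ε/2) := by
            filter_upwards [eventually_ge_atTop K] with k hk
            have hhonl : ∀ f ∈ F, AEMeasurable (g f) (P (msel k)) := (hlprop (ψ k)).2
            have haemk := hhonl _ (hfkF (ψ k))
            have hint_g : Integrable (g (fk (ψ k))) (P (msel k)) :=
              hgint _ (hfkF (ψ k)) _ (hφintP _) haemk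
            have hint_min : Integrable (fun z => min (g (fk (ψ k)) z) (M:ℝ)) (P (msel k)) := by
              refine Integrable.mono' (integrable_const (M:ℝ))
                (haemk.min aemeasurable_const).aestronglyMeasurable
                (Eventually.of_forall fun z => ?_)
              rw [Real.norm_eq_abs, abs_of_nonneg (le_min (hg0 _ _) hMnn)]
              exact min_le_right _ _
            have hint_hK : Integrable (hKfun K) (P (msel k)) := by
              refine Integrable.mono' (integrable_const (M:ℝ))
                (hKaem K _ hhonl).aestronglyMeasurable
                (Eventually.of_forall fun z => ?_)
              rw [Real.norm_eq_abs, abs_of_nonneg (hK0 K z)]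
              exact hKM K z
            have hKle : ∀ z, hKfun K z ≤ min (g (fk (ψ k)) z) (M:ℝ) := by
              intro z
              have h2 : K + (k - K) = k := by omega
              have h3 := ciInf_le (hbbK K z) (k - K)
              rwa [h2] at h3
            rw [Set.mem_Iic]
            calc (∫ z, hKfun K z ∂(P (msel k)))
                ≤ ∫ z, min (g (fk (ψ k)) z) (M:ℝ) ∂(P (msel k)) :=
                  integral_mono hint_hK hint_min hKle
              _ ≤ ∫ z, g (fk (ψ k)) z ∂(P (msel k)) :=
                  integral_mono hint_min hint_g fun z => min_le_left _ _
              _ ≤ θ - ε/2 := (hfkmin (ψ k)).le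
          exact hmmono.tendsto_atTop.frequently h1.frequently
        have hmem := (isClosed_Iic).mem_of_frequently_of_tendsto hfr hlim
        exact hmem
      have hKtend : Tendsto (fun K => ∫ z, hKfun K z ∂Plim) atTop
          (𝓝 (∫ z, min (gbar z) (M:ℝ) ∂Plim)) := by
        apply tendsto_integral_of_dominated_convergence (fun _ => (M:ℝ))
          (fun K => (hKaem K Plim hhon).aestronglyMeasurable) (integrable_const _)
        · intro K
          refine Eventually.of_forall fun z => ?_
          rw [Real.norm_eq_abs, abs_of_nonneg (hK0 K z)]
          exact hKM K z
        · refine ae_of_all _ fun z => ?_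
          have h1 : Tendsto (fun j => min (g (fk (ψ j)) z) (M:ℝ)) atTop
              (𝓝 (min (gbar z) (M:ℝ))) := (hconv z).min tendsto_const_nhds
          exact auxTendsto_iInf_tail h1 (fun j => le_min (hg0 _ _) hMnn)
      exact le_of_tendsto hKtend (Eventually.of_forall hKbound)
    have hMtend : Tendsto (fun M : ℕ => ∫ z, min (gbar z) (M:ℝ) ∂Plim) atTop
        (𝓝 (∫ z, gbar z ∂Plim)) := by
      apply tendsto_integral_of_dominated_convergence φ
        (fun M => (hgbaraem.min aemeasurable_const).aestronglyMeasurable) hφintPlim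
      · intro M
        refine Eventually.of_forall fun z => ?_
        rw [Real.norm_eq_abs, abs_of_nonneg (le_min (hgbar0 z) (Nat.cast_nonneg M))]
        exact le_trans (min_le_left _ _) (hgbarφ z)
      · exact ae_of_all _ fun z => auxMin_tendsto_self trivial
    have hfinal : (∫ z, gbar z ∂Plim) ≤ θ - ε/2 :=
      le_of_tendsto hMtend (Eventually.of_forall hMstep)
    linarith
  -- conclude
  rw [Metric.tendsto_atTop]
  intro ε hε
  obtain ⟨N, hN⟩ := eventually_atTop.1 ((hupper ε hε).and (hlower ε hε))
  refine ⟨N, fun l hl => ?_⟩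
  obtain ⟨h1, h2⟩ := hN l hl
  rw [Real.dist_eq, abs_lt]
  constructor <;> [linarith; linarith]
end
end

section
/- Consider the least squares cost c(z,f(x)) = (1/2)|y − f(x)|². Suppose the kernel k is calm from above with growth function g and ‖f‖_k ≤ β for all f ∈ F ⊂ H_k. Let η(z) := |y| + β√(k(x,x)). Then for all z = (x,y), z' = (x',y') ∈ Z and all f ∈ F: |c(z,f(x)) − c(z',f(x'))| ≤ max{η(z), η(z')} · ( |y − y'| + β g(‖x − x'‖) ). -/
open scoped RealInnerProductSpace

noncomputable section

/-- for the least squares cost `c(z,f(x)) = (1/2)|y − f(x)|²`, if the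
kernel `k(x,x') = ⟪Φ x, Φ x'⟫` is calm from above with growth function `g` and
`‖f‖_k ≤ β` for all `f ∈ F`, then with `η(z) = |y| + β√(k(x,x))`:
`|c(z,f(x)) − c(z',f(x'))| ≤ max{η(z),η(z')}·(|y − y'| + β g(‖x − x'‖))`. -/
theorem stmt10
    {X H : Type*} [NormedAddCommGroup X]
    [NormedAddCommGroup H] [InnerProductSpace ℝ H]
    (Φ : X → H) (F : Set H)
    (β : ℝ) (hβ : 0 < β) (hAb : ∀ f ∈ F, ‖f‖ ≤ β)
    -- the kernel is calm from above with growth function `g`: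
    -- `g` is concave on `[0,∞)`, smooth, `g(0) = 0` and `g' ≥ 1`
    (g : ℝ → ℝ) (hg0 : g 0 = 0)
    (hgconc : ConcaveOn ℝ (Set.Ici (0 : ℝ)) g)
    (hgdiff : ∀ t : ℝ, 0 ≤ t → DifferentiableAt ℝ g t)
    (hgderiv : ∀ t : ℝ, 0 ≤ t → 1 ≤ deriv g t)
    (hcalm : ∀ x x' : X,
      Real.sqrt (⟪Φ x', Φ x'⟫ - 2 * ⟪Φ x, Φ x'⟫ + ⟪Φ x, Φ x⟫) ≤ g ‖x - x'‖) :
    ∀ f ∈ F, ∀ (x x' : X) (y y' : ℝ),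
      |(1 / 2) * |y - ⟪f, Φ x⟫| ^ 2 - (1 / 2) * |y' - ⟪f, Φ x'⟫| ^ 2|
        ≤ max (|y| + β * Real.sqrt ⟪Φ x, Φ x⟫) (|y'| + β * Real.sqrt ⟪Φ x', Φ x'⟫)
          * (|y - y'| + β * g ‖x - x'‖) := by
  intro f hf x x' y y'
  have hfβ : ‖f‖ ≤ β := hAb f hf
  set a := y - ⟪f, Φ x⟫ with ha
  set b := y' - ⟪f, Φ x'⟫ with hb
  have hsq : ∀ u : H, Real.sqrt ⟪u, u⟫ = ‖u‖ := by
    intro u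
    rw [real_inner_self_eq_norm_sq, Real.sqrt_sq (norm_nonneg u)]
  -- bound |a| ≤ η(z)
  have hηx : |a| ≤ |y| + β * Real.sqrt ⟪Φ x, Φ x⟫ := by
    rw [hsq]
    calc |a| ≤ |y| + |⟪f, Φ x⟫| := abs_sub _ _
    _ ≤ |y| + ‖f‖ * ‖Φ x‖ := by gcongr; exact abs_real_inner_le_norm f (Φ x)
    _ ≤ |y| + β * ‖Φ x‖ := by gcongr
  have hηx' : |b| ≤ |y'| + β * Real.sqrt ⟪Φ x', Φ x'⟫ := by
    rw [hsq]
    calc |b| ≤ |y'| + |⟪f, Φ x'⟫| := abs_sub _ _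
    _ ≤ |y'| + ‖f‖ * ‖Φ x'‖ := by gcongr; exact abs_real_inner_le_norm f (Φ x')
    _ ≤ |y'| + β * ‖Φ x'‖ := by gcongr
  set M := max (|y| + β * Real.sqrt ⟪Φ x, Φ x⟫) (|y'| + β * Real.sqrt ⟪Φ x', Φ x'⟫)
    with hM
  have haM : |a| ≤ M := le_trans hηx (le_max_left _ _)
  have hbM : |b| ≤ M := le_trans hηx' (le_max_right _ _)
  have hM0 : 0 ≤ M := le_trans (abs_nonneg a) haM
  -- bound on ‖Φ x - Φ x'‖
  have hnorm : ‖Φ x - Φ x'‖ ≤ g ‖x - x'‖ := by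
    have h := hcalm x' x
    rwa [real_inner_comm (Φ x) (Φ x'), ← real_inner_sub_sub_self, hsq,
      norm_sub_rev x' x] at h
  -- bound on |a - b|
  have hab : |a - b| ≤ |y - y'| + β * g ‖x - x'‖ := by
    have h1 : a - b = (y - y') - ⟪f, Φ x - Φ x'⟫ := by
      rw [ha, hb, inner_sub_right]; ring
    calc |a - b| ≤ |y - y'| + |⟪f, Φ x - Φ x'⟫| := by rw [h1]; exact abs_sub _ _
    _ ≤ |y - y'| + ‖f‖ * ‖Φ x - Φ x'‖ := by
        gcongr; exact abs_real_inner_le_norm _ _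
    _ ≤ |y - y'| + β * g ‖x - x'‖ := by
        have hg : (0:ℝ) ≤ g ‖x - x'‖ := le_trans (Real.sqrt_nonneg _) (hcalm x x')
        exact add_le_add (le_refl _) (mul_le_mul hfβ hnorm (norm_nonneg _) hβ.le)
  have key : |(1 / 2) * |a| ^ 2 - (1 / 2) * |b| ^ 2| ≤ M * |a - b| := by
    have : (1 / 2) * |a| ^ 2 - (1 / 2) * |b| ^ 2 = ((a + b) / 2) * (a - b) := by
      rw [sq_abs, sq_abs]; ring
    rw [this, abs_mul]
    have h2 : |(a + b) / 2| ≤ M := by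
      calc |(a + b) / 2| ≤ (|a| + |b|) / 2 := by
            rw [abs_div, abs_two]; gcongr; exact abs_add_le _ _
      _ ≤ M := by linarith
    exact mul_le_mul_of_nonneg_right h2 (abs_nonneg _)
  calc |(1 / 2) * |a| ^ 2 - (1 / 2) * |b| ^ 2| ≤ M * |a - b| := key
  _ ≤ M * (|y - y'| + β * g ‖x - x'‖) := by gcongr
end
end
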